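/- arXiv:2507.03687 — 5 statements merged into one kernel-verified Lean document; each statement's English description precedes it below -/
import Mathlib

section
/- Let k ≥ 2 and let p_1 ≥ p_2 ≥ ... ≥ p_k be real numbers. Suppose there exists C ≥ 0 such that (1/i)·(∑_{j=1}^i p_j) − p_{i+1} ≤ C for all i ∈ {1,...,k−1}. Then p_1 ≤ H_i · C + p_{i+1} for all i ∈ {1,...,k−1}, where H_i is the i-th harmonic number. -/
noncomputable def H (j : ℕ) : ℝ := ∑ m ∈ Finset.Icc 1 j, (1 : ℝ) / m

theorem balanced_p1_bound (k : ℕ) (hk : 2 ≤ k) (p : ℕ → ℝ)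
    (hmono : ∀ i j, 1 ≤ i → i ≤ j → j ≤ k → p j ≤ p i)
    (C : ℝ) (hC : 0 ≤ C)
    (hbal : ∀ i ∈ Finset.Icc 1 (k - 1),
      (1 / (i : ℝ)) * (∑ j ∈ Finset.Icc 1 i, p j) - p (i + 1) ≤ C) :
    ∀ i ∈ Finset.Icc 1 (k - 1), p 1 ≤ H i * C + p (i + 1) := by
  simp only [Finset.mem_Icc] at hbal ⊢
  -- pointwise step: from the sum invariant at n, deduce the bound at n+1
  have hstep : ∀ n : ℕ, 1 ≤ n → n ≤ k - 1 →
      (∑ j ∈ Finset.Icc 1 n, (p 1 - p j)) ≤ (n : ℝ) * (H n - 1) * C →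
      p 1 - p (n+1) ≤ H n * C := by
    intro n hn1 hnk hsum
    have hb := hbal n ⟨hn1, hnk⟩
    have hn0 : (0:ℝ) < n := by exact_mod_cast hn1
    have hsum' : ∑ j ∈ Finset.Icc 1 n, p j
        = (n : ℝ) * p 1 - ∑ j ∈ Finset.Icc 1 n, (p 1 - p j) := by
      rw [Finset.sum_sub_distrib, Finset.sum_const, Nat.card_Icc]
      simp
    rw [hsum'] at hb
    have h1 : p 1 - p (n+1) ≤ (∑ j ∈ Finset.Icc 1 n, (p 1 - p j)) / n + C := by
      have h := mul_le_mul_of_nonneg_left hb hn0.le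
      have e : (n:ℝ) * (1 / (n:ℝ) * ((n:ℝ) * p 1 - ∑ j ∈ Finset.Icc 1 n, (p 1 - p j)) - p (n + 1))
          = (n:ℝ) * p 1 - (∑ j ∈ Finset.Icc 1 n, (p 1 - p j)) - (n:ℝ) * p (n+1) := by
        field_simp
      rw [e] at h
      rw [div_add' _ _ _ (ne_of_gt hn0), le_div_iff₀ hn0]
      nlinarith [h]
    calc p 1 - p (n+1) ≤ (∑ j ∈ Finset.Icc 1 n, (p 1 - p j)) / n + C := h1
      _ ≤ ((n : ℝ) * (H n - 1) * C) / n + C := by gcongr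
      _ = H n * C := by field_simp; ring
  -- sum invariant by induction
  have key : ∀ n : ℕ, 1 ≤ n → n ≤ k - 1 →
      (∑ j ∈ Finset.Icc 1 n, (p 1 - p j)) ≤ (n : ℝ) * (H n - 1) * C := by
    intro n hn1
    induction n, hn1 using Nat.le_induction with
    | base =>
      intro _
      simp [H]
    | succ n hn ih =>
      intro hnk
      have hnk' : n ≤ k - 1 := le_trans (Nat.le_succ n) hnk
      have ihs := ih hnk'
      have hpt := hstep n hn hnk' ihs
      have hsplit : (∑ j ∈ Finset.Icc 1 (n+1), (p 1 - p j))
          = (∑ j ∈ Finset.Icc 1 n, (p 1 - p j)) + (p 1 - p (n+1)) :=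
        Finset.sum_Icc_succ_top (Nat.le_succ_of_le hn) _
      have hH : H (n+1) = H n + 1 / ((n:ℝ)+1) := by
        unfold H
        rw [Finset.sum_Icc_succ_top (by omega)]
        push_cast
        ring
      have hrhs : ((n:ℝ)+1) * (H n + 1/((n:ℝ)+1) - 1) * C
          = ((n:ℝ)+1)*(H n - 1)*C + C := by field_simp; ring
      rw [hsplit, hH]
      push_cast
      rw [hrhs]
      nlinarith [hpt, ihs]
  intro i hi
  have := hstep i hi.1 hi.2 (key i hi.1 hi.2)
  linarith
end

section
/- Let k ≥ 1 and let p_1 ≥ p_2 ≥ ... ≥ p_k be real numbers. Suppose there exists C ≥ 0 such that (1/i)·(∑_{j=1}^i p_j) − p_{i+1} ≤ C for all i ∈ {1,...,k−1}, and additionally ∑_{j=1}^k p_j ≤ k·C. Then p_1 ≤ H_k · C, where H_k is the k-th harmonic number. -/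
theorem balanced_consistent_Hk_bound (k : ℕ) (hk : 1 ≤ k) (p : ℕ → ℝ)
    (hmono : ∀ i j, 1 ≤ i → i ≤ j → j ≤ k → p j ≤ p i)
    (C : ℝ) (hC : 0 ≤ C)
    (hbal : ∀ i ∈ Finset.Icc 1 (k - 1),
      (1 / (i : ℝ)) * (∑ j ∈ Finset.Icc 1 i, p j) - p (i + 1) ≤ C)
    (hsum : ∑ j ∈ Finset.Icc 1 k, p j ≤ (k : ℝ) * C) :
    p 1 ≤ H k * C := by
  have key : ∀ i, 1 ≤ i → i ≤ k →
      (p 1 - (H i - 1) * C) * i ≤ ∑ j ∈ Finset.Icc 1 i, p j := by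
    intro i hi
    induction i, hi using Nat.le_induction with
    | base => intro _; simp [H]
    | succ n hn ih =>
      intro hnk
      have hnk' : n ≤ k := le_trans (Nat.le_succ n) hnk
      have ihn := ih hnk'
      have hmem : n ∈ Finset.Icc 1 (k - 1) := by
        rw [Finset.mem_Icc]; omega
      have hb := hbal n hmem
      have hnpos : (0:ℝ) < n := by exact_mod_cast hn
      have hS : ∑ j ∈ Finset.Icc 1 (n+1), p j
          = (∑ j ∈ Finset.Icc 1 n, p j) + p (n+1) :=
        Finset.sum_Icc_succ_top (by omega) p
      have hH : H (n+1) = H n + 1/((n:ℝ)+1) := by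
        unfold H
        rw [Finset.sum_Icc_succ_top (by omega)]
        push_cast; ring
      set S := ∑ j ∈ Finset.Icc 1 n, p j with hSdef
      have hb' : S ≤ (n:ℝ) * p (n+1) + n * C := by
        have h0 : (1 / (n:ℝ)) * S ≤ p (n+1) + C := by linarith
        have h1 : (1 / (n:ℝ)) * S * n ≤ (p (n+1) + C) * n :=
          mul_le_mul_of_nonneg_right h0 (le_of_lt hnpos)
        have h2 : (1 / (n:ℝ)) * S * n = S := by
          field_simp
        nlinarith
      set A := p 1 - (H n - 1) * C with hAdef
      have h1 : A * n ≤ (p (n+1) + C) * n := by nlinarith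
      have h2 : A ≤ p (n+1) + C := le_of_mul_le_mul_right h1 hnpos
      rw [hS, hH]
      push_cast
      have hn1 : (n:ℝ)+1 ≠ 0 := by positivity
      have hEq : (p 1 - (H n + 1/((n:ℝ)+1) - 1) * C) * ((n:ℝ)+1)
          = A * ((n:ℝ)+1) - C := by
        rw [hAdef]; field_simp; ring
      rw [hEq]
      nlinarith [ihn, h2]
  have hk' : (0:ℝ) < k := by exact_mod_cast hk
  have h := key k hk le_rfl
  have h2 : (p 1 - (H k - 1) * C) * k ≤ (k:ℝ) * C := le_trans h hsum
  have h3 : p 1 * k ≤ (H k * C) * k := by nlinarith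
  exact le_of_mul_le_mul_right h3 hk'
end

section
/- Let k ≥ 2 and let q_1 ≥ ... ≥ q_k and r_1 ≥ ... ≥ r_k be nonincreasing sequences of nonnegative reals. Define p_i' = q_i + r_{k−i+1}, and let p_1 ≥ ... ≥ p_k be the nonincreasing rearrangement of (p_1', ..., p_k'). Suppose there exist constants C₁, C₂ ≥ 0 with (1/i)·(∑_{j=1}^i q_j) − q_{i+1} ≤ C₁ and (1/i)·(∑_{j=1}^i r_j) − r_{i+1} ≤ C₂ for all i ∈ {1,...,k−1}. Then for all i ∈ {1,...,k−1}, (1/i)·(∑_{j=1}^i p_j) − p_{i+1} ≤ C₁ + C₂. -/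
/-!
Let `S` be the set of indices `t` of the `i` largest combined lengths
`p'_t = q_t + r_{k-t+1}`, so that `p'_t ≤ y := p_{i+1}` off `S`, and let `c` be the largest
index outside `S`. For `t ∈ S` above `c`, `q_t ≤ q_c` gives `p'_t - y ≤ r_{k+1-t} - r_{k+1-c}`,
and after reflecting `t ↦ k + 1 - t` these terms form a prefix deficit of `r`, at most
`(k - c) C₂` by balance. For `t ∈ S` below `c`, comparing with the next index `c'` outside `S`
above `t` gives `p'_t - y ≤ q_t - q_{c'}`. These gap deficits of `q` add up to at most
`(c - #Sᶜ) C₁`, by induction on the indices outside `S`: when a new largest one `b` is added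
above `a`, the induction hypothesis and the balance of `q` at `b - 1` are combined with weights
`a` and `b - 1 - a`. Both coefficients `c - #Sᶜ` and `k - c` are at most `i`.
-/

open Finset

def IsBalanced (k : ℕ) (C : ℝ) (x : ℕ → ℝ) : Prop :=
  ∀ n < k, ∑ j ∈ Icc 1 n, (x j - x (n + 1)) ≤ n * C

theorem one_div_mul_sum_sub_le_iff (x : ℕ → ℝ) (y C : ℝ) {n : ℕ} (hn : 1 ≤ n) :
    (1 / (n : ℝ)) * ∑ j ∈ Icc 1 n, x j - y ≤ C ↔
      ∑ j ∈ Icc 1 n, (x j - y) ≤ n * C := by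
  have hn' : (0 : ℝ) < n := by exact_mod_cast hn
  rw [sum_sub_distrib, sum_const, Nat.card_Icc, Nat.add_sub_cancel, nsmul_eq_mul,
    one_div_mul_eq_div, sub_le_iff_le_add, div_le_iff₀ hn', sub_le_iff_le_add]
  constructor <;> intro h <;> linarith

theorem isBalanced_of_one_div_mul_sum_sub_le {k : ℕ} {C : ℝ} {x : ℕ → ℝ}
    (h : ∀ i ∈ Icc 1 (k - 1), (1 / (i : ℝ)) * (∑ j ∈ Icc 1 i, x j) - x (i + 1) ≤ C) :
    IsBalanced k C x := by
  intro n hn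
  rcases Nat.eq_zero_or_pos n with rfl | hn0
  · simp
  · exact (one_div_mul_sum_sub_le_iff x _ C hn0).1 (h n (mem_Icc.2 ⟨hn0, by omega⟩))

theorem sum_Ico_sub_eq (x : ℕ → ℝ) {a b : ℕ} (hab : a < b) :
    ∑ u ∈ Ico 1 b, (x u - x b) =
      ∑ u ∈ Icc 1 a, (x u - x a) + a * (x a - x b) + ∑ u ∈ Ioo a b, (x u - x b) := by
  have hsplit : Ico 1 b = Icc 1 a ∪ Ioo a b := by
    ext u; simp only [mem_Ico, mem_union, mem_Icc, mem_Ioo]; omega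
  have hdisj : Disjoint (Icc 1 a) (Ioo a b) := by
    rw [disjoint_left]; intro u; simp only [mem_Icc, mem_Ioo]; omega
  have hshift : ∑ u ∈ Icc 1 a, (x u - x b) = ∑ u ∈ Icc 1 a, ((x u - x a) + (x a - x b)) :=
    sum_congr rfl fun _ _ => by ring
  rw [hsplit, sum_union hdisj, hshift, sum_add_distrib, sum_const, Nat.card_Icc,
    Nat.add_sub_cancel, nsmul_eq_mul]

theorem Ico_sdiff_insert_of_forall_lt {s : Finset ℕ} {a b : ℕ} (hs : ∀ c ∈ s, c < a)
    (hab : a < b) : Ico 1 b \ insert a s = (Ico 1 a \ s) ∪ Ioo a b := by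
  ext u
  have := hs u
  simp only [mem_sdiff, mem_Ico, mem_insert, mem_union, mem_Ioo]
  grind

theorem AntitoneOn.sum_Ioo_sub_le {k : ℕ} {x : ℕ → ℝ} (hx : AntitoneOn x (Set.Icc 1 k))
    {a b : ℕ} (ha : 1 ≤ a) (hab : a < b) (hbk : b ≤ k) :
    ∑ u ∈ Ioo a b, (x u - x b) ≤ (b - a - 1 : ℝ) * (x a - x b) := by
  have hcard : (#(Ioo a b) : ℝ) = b - a - 1 := by
    rw [Nat.card_Ioo, Nat.cast_sub (by omega), Nat.cast_sub hab.le, Nat.cast_one]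
  rw [← hcard, ← nsmul_eq_mul]
  refine sum_le_card_nsmul _ _ _ fun u hu => sub_le_sub_right ?_ _
  rw [mem_Ioo] at hu
  exact hx ⟨ha, by omega⟩ ⟨by omega, by omega⟩ hu.1.le

namespace IsBalanced

variable {k : ℕ} {C : ℝ} {x : ℕ → ℝ}

theorem sum_Ico_sub_le (h : IsBalanced k C x) {b : ℕ} (hb : 1 ≤ b) (hbk : b ≤ k) :
    ∑ j ∈ Ico 1 b, (x j - x b) ≤ (b - 1 : ℝ) * C := by
  obtain ⟨n, rfl⟩ := Nat.exists_eq_add_of_le' hb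
  have hIco : Ico 1 (n + 1) = Icc 1 n := by ext j; simp only [mem_Ico, mem_Icc]; omega
  rw [hIco]
  push_cast
  simpa using h n (by omega)

theorem sum_Ioc_reflect_sub_le (h : IsBalanced k C x) {c : ℕ} (hc : 1 ≤ c) (hck : c ≤ k) :
    ∑ t ∈ Ioc c k, (x (k - t + 1) - x (k - c + 1)) ≤ (k - c : ℝ) * C := by
  have hreflect : ∑ t ∈ Ioc c k, (x (k - t + 1) - x (k - c + 1))
      = ∑ u ∈ Ico 1 (k - c + 1), (x u - x (k - c + 1)) := by
    refine sum_nbij' (fun t => k + 1 - t) (fun u => k + 1 - u) ?_ ?_ ?_ ?_ ?_ <;>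
      intro t ht <;> simp only [mem_Ioc, mem_Ico] at ht ⊢ <;>
      first | omega | congr 2; omega
  have := h.sum_Ico_sub_le (b := k - c + 1) (by omega) (by omega)
  rwa [hreflect, ← Nat.cast_sub hck, ← add_sub_cancel_right ((k - c : ℕ) : ℝ) 1,
    ← Nat.cast_succ]

theorem sum_Ico_sdiff_le (h : IsBalanced k C x) (hx : AntitoneOn x (Set.Icc 1 k)) (hC : 0 ≤ C)
    (F : ℕ → ℝ) (s : Finset ℕ) {b : ℕ} (hb : 1 ≤ b) (hbk : b ≤ k) (hs : s ⊆ Ioo 0 b)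
    (hF : ∀ u ∈ Ico 1 b \ s, ∀ c ∈ insert b s, u < c → F u ≤ x u - x c) :
    ∑ u ∈ Ico 1 b \ s, F u ≤ (b - 1 - #s : ℝ) * C := by
  induction s using Finset.induction_on_max generalizing b with
  | empty =>
    simp only [sdiff_empty, card_empty, Nat.cast_zero, sub_zero]
    calc ∑ u ∈ Ico 1 b, F u ≤ ∑ u ∈ Ico 1 b, (x u - x b) :=
          sum_le_sum fun u hu =>
            hF u (by simpa using hu) b (mem_insert_self _ _) (mem_Ico.1 hu).2
      _ ≤ _ := h.sum_Ico_sub_le hb hbk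
  | insert a s hlt ih =>
    obtain ⟨ha, hab⟩ := mem_Ioo.1 (hs (mem_insert_self a s))
    have hsa : s ⊆ Ioo 0 a := fun c hc =>
      mem_Ioo.2 ⟨(mem_Ioo.1 (hs (mem_insert_of_mem hc))).1, hlt c hc⟩
    have hcard : (#s : ℝ) + 1 ≤ a := by
      have := card_le_card hsa
      rw [Nat.card_Ioo] at this
      exact_mod_cast (by omega : #s + 1 ≤ a)
    have hsplit := Ico_sdiff_insert_of_forall_lt hlt hab
    have hdisj : Disjoint (Ico 1 a \ s) (Ioo a b) := by
      rw [disjoint_left]; intro u; simp only [mem_sdiff, mem_Ico, mem_Ioo]; omega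
    have hF_low : ∀ u ∈ Ico 1 a \ s, ∀ c ∈ insert a s, u < c → F u ≤ x u - x c :=
      fun u hu c hc huc => hF u (by rw [hsplit]; exact mem_union_left _ hu) c
        (mem_insert_of_mem hc) huc
    have hF_high : ∀ u ∈ Ioo a b, F u ≤ x u - x b := fun u hu =>
      hF u (by rw [hsplit]; exact mem_union_right _ hu) b (mem_insert_self _ _) (mem_Ioo.1 hu).2
    set T := ∑ u ∈ Ico 1 a \ s, F u
    set W := ∑ u ∈ Ioo a b, F u
    have hT_ih : T ≤ (a - 1 - #s : ℝ) * C := ih ha (by omega) hsa hF_low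
    have hT_low : T ≤ ∑ u ∈ Icc 1 a, (x u - x a) := calc
      T ≤ ∑ u ∈ Ico 1 a \ s, (x u - x a) := sum_le_sum fun u hu =>
          hF_low u hu a (mem_insert_self _ _) (mem_Ico.1 (mem_sdiff.1 hu).1).2
      _ ≤ _ := sum_le_sum_of_subset_of_nonneg (sdiff_subset.trans Ico_subset_Icc_self)
          fun u hu _ => sub_nonneg.2 <| by
            rw [mem_Icc] at hu
            exact hx ⟨hu.1, by omega⟩ ⟨by omega, by omega⟩ hu.2
    have hW : W ≤ ∑ u ∈ Ioo a b, (x u - x b) := sum_le_sum hF_high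
    have hgap := hx.sum_Ioo_sub_le ha hab hbk
    have hbal := h.sum_Ico_sub_le hb hbk
    rw [sum_Ico_sub_eq x hab] at hbal
    rw [hsplit, sum_union hdisj, card_insert_of_notMem fun ha => (hlt a ha).false]
    have hab' : (a : ℝ) + 1 ≤ b := by exact_mod_cast hab
    have h₁ : T + W ≤ (a - 1 - #s : ℝ) * C + (b - a - 1) * (x a - x b) := by linarith
    have h₂ : T + W ≤ (b - 1 : ℝ) * C - a * (x a - x b) := by linarith
    -- weight `h₁` by `a` and `h₂` by `b - 1 - a`: the `x a - x b` terms cancel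
    have key : (b - 1 : ℝ) * (T + W) ≤ (b - 1) * ((b - 1 - ↑(#s + 1)) * C) := by
      push_cast
      nlinarith [mul_le_mul_of_nonneg_left h₁ (by positivity : (0 : ℝ) ≤ a),
        mul_le_mul_of_nonneg_left h₂ (by linarith : (0 : ℝ) ≤ b - 1 - a),
        mul_nonneg (mul_nonneg (by linarith : (0 : ℝ) ≤ b - 1 - a)
          (by linarith : (0 : ℝ) ≤ a - 1 - #s)) hC]
    exact le_of_mul_le_mul_left key (by linarith)

end IsBalanced

theorem sum_add_reflect_sub_le_of_max {k : ℕ} {q r : ℕ → ℝ} {C₁ C₂ : ℝ}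
    (hq : AntitoneOn q (Set.Icc 1 k)) (hr : AntitoneOn r (Set.Icc 1 k))
    (hbq : IsBalanced k C₁ q) (hbr : IsBalanced k C₂ r) (hC₁ : 0 ≤ C₁)
    {S : Finset ℕ} (hS : S ⊆ Icc 1 k) {y : ℝ}
    (hy : ∀ t ∈ Icc 1 k \ S, q t + r (k - t + 1) ≤ y)
    {c : ℕ} (hcT : c ∈ Icc 1 k \ S) (hc : ∀ t ∈ Icc 1 k \ S, t ≤ c) :
    ∑ t ∈ S, (q t + r (k - t + 1) - y) ≤ (c - #(Icc 1 k \ S)) * C₁ + (k - c) * C₂ := by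
  set T := Icc 1 k \ S with hT
  obtain ⟨⟨hc1, hck⟩, hcS⟩ : (1 ≤ c ∧ c ≤ k) ∧ c ∉ S := by simpa [hT] using hcT
  have hsplit : S = (Ico 1 c \ T.erase c) ∪ Ioc c k := by
    ext t
    have hle := hc t
    have hSt := @hS t
    simp only [hT, mem_union, mem_sdiff, mem_Ico, mem_Ioc, mem_erase, mem_Icc] at hle hSt ⊢
    grind
  have hdisj : Disjoint (Ico 1 c \ T.erase c) (Ioc c k) := by
    rw [disjoint_left]; intro u; simp only [mem_sdiff, mem_Ico, mem_Ioc]; omega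
  have hlow : ∑ t ∈ Ico 1 c \ T.erase c, (q t + r (k - t + 1) - y) ≤ (c - #T) * C₁ := by
    have hF : ∀ u ∈ Ico 1 c \ T.erase c, ∀ c' ∈ insert c (T.erase c), u < c' →
        q u + r (k - u + 1) - y ≤ q u - q c' := by
      intro u hu c' hc' huc'
      rw [insert_erase hcT] at hc'
      have hc'k : 1 ≤ c' ∧ c' ≤ k := mem_Icc.1 (mem_sdiff.1 hc').1
      have hu : 1 ≤ u ∧ u < c := mem_Ico.1 (mem_sdiff.1 hu).1
      have hr' : r (k - u + 1) ≤ r (k - c' + 1) :=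
        hr ⟨by omega, by omega⟩ ⟨by omega, by omega⟩ (by omega)
      linarith [hy c' hc']
    have hs : T.erase c ⊆ Ioo 0 c := fun t ht =>
      have htT := mem_of_mem_erase ht
      mem_Ioo.2 ⟨(mem_Icc.1 (mem_sdiff.1 htT).1).1, (hc t htT).lt_of_ne (ne_of_mem_erase ht)⟩
    have := hbq.sum_Ico_sdiff_le hq hC₁ _ _ hc1 hck hs hF
    rwa [card_erase_of_mem hcT, Nat.cast_sub (card_pos.2 ⟨c, hcT⟩), Nat.cast_one,
      sub_sub_sub_cancel_right] at this
  have hhigh : ∑ t ∈ Ioc c k, (q t + r (k - t + 1) - y) ≤ (k - c) * C₂ := calc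
    ∑ t ∈ Ioc c k, (q t + r (k - t + 1) - y)
        ≤ ∑ t ∈ Ioc c k, (r (k - t + 1) - r (k - c + 1)) := sum_le_sum fun t ht => by
          have ht := mem_Ioc.1 ht
          linarith [hy c hcT, hq ⟨hc1, hck⟩ ⟨by omega, ht.2⟩ ht.1.le]
    _ ≤ (k - c) * C₂ := hbr.sum_Ioc_reflect_sub_le hc1 hck
  calc ∑ t ∈ S, (q t + r (k - t + 1) - y)
      = ∑ t ∈ Ico 1 c \ T.erase c, (q t + r (k - t + 1) - y)
        + ∑ t ∈ Ioc c k, (q t + r (k - t + 1) - y) := by rw [← sum_union hdisj, ← hsplit]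
    _ ≤ (c - #T) * C₁ + (k - c) * C₂ := add_le_add hlow hhigh

theorem sum_add_reflect_sub_le {k : ℕ} {q r : ℕ → ℝ} {C₁ C₂ : ℝ}
    (hq : AntitoneOn q (Set.Icc 1 k)) (hr : AntitoneOn r (Set.Icc 1 k))
    (hbq : IsBalanced k C₁ q) (hbr : IsBalanced k C₂ r) (hC₁ : 0 ≤ C₁) (hC₂ : 0 ≤ C₂)
    {S : Finset ℕ} (hS : S ⊆ Icc 1 k) (hSk : #S < k) {y : ℝ}
    (hy : ∀ t ∈ Icc 1 k \ S, q t + r (k - t + 1) ≤ y) :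
    ∑ t ∈ S, (q t + r (k - t + 1) - y) ≤ #S * (C₁ + C₂) := by
  set T := Icc 1 k \ S
  have hTcard : #T = k - #S := by rw [card_sdiff_of_subset hS, Nat.card_Icc]; omega
  have hTne : T.Nonempty := by rw [← card_pos]; omega
  set c := T.max' hTne
  have hcT : c ∈ T := max'_mem T hTne
  have hTc : #T ≤ c := by
    have hsub : T ⊆ Icc 1 c := fun t ht =>
      mem_Icc.2 ⟨(mem_Icc.1 (mem_sdiff.1 ht).1).1, le_max' T t ht⟩
    have := card_le_card hsub
    rwa [Nat.card_Icc, Nat.add_sub_cancel] at this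
  have hck : c ≤ k := (mem_Icc.1 (mem_sdiff.1 hcT).1).2
  have hTcard' : (#T : ℝ) = k - #S := by rw [hTcard, Nat.cast_sub hSk.le]
  have hkc : (k : ℝ) - c ≤ #S := by
    rw [sub_le_iff_le_add]; exact_mod_cast (by omega : k ≤ #S + c)
  have hck' : (c : ℝ) ≤ k := by exact_mod_cast hck
  calc ∑ t ∈ S, (q t + r (k - t + 1) - y) ≤ (c - #T) * C₁ + (k - c) * C₂ :=
        sum_add_reflect_sub_le_of_max hq hr hbq hbr hC₁ hS hy hcT fun t ht => le_max' T t ht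
    _ ≤ #S * (C₁ + C₂) := by
      rw [hTcard']
      nlinarith [mul_le_mul_of_nonneg_right hkc hC₂, mul_le_mul_of_nonneg_right hck' hC₁]

theorem series_composition_balanced_general (k : ℕ) (q r p : ℕ → ℝ)
    (hqmono : ∀ i j, 1 ≤ i → i ≤ j → j ≤ k → q j ≤ q i)
    (hrmono : ∀ i j, 1 ≤ i → i ≤ j → j ≤ k → r j ≤ r i)
    (hpmono : ∀ i j, 1 ≤ i → i ≤ j → j ≤ k → p j ≤ p i)
    (σ : ℕ → ℕ)
    (hbij : Set.BijOn σ (Finset.Icc 1 k : Set ℕ) (Finset.Icc 1 k : Set ℕ))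
    (hperm : ∀ i ∈ Finset.Icc 1 k, p i = q (σ i) + r (k - σ i + 1))
    (C₁ C₂ : ℝ) (hC₁ : 0 ≤ C₁) (hC₂ : 0 ≤ C₂)
    (hbq : ∀ i ∈ Finset.Icc 1 (k - 1),
      (1 / (i : ℝ)) * (∑ j ∈ Finset.Icc 1 i, q j) - q (i + 1) ≤ C₁)
    (hbr : ∀ i ∈ Finset.Icc 1 (k - 1),
      (1 / (i : ℝ)) * (∑ j ∈ Finset.Icc 1 i, r j) - r (i + 1) ≤ C₂) :
    ∀ i ∈ Finset.Icc 1 (k - 1),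
      (1 / (i : ℝ)) * (∑ j ∈ Finset.Icc 1 i, p j) - p (i + 1) ≤ C₁ + C₂ := by
  intro i hi
  obtain ⟨hi1, hik⟩ : 1 ≤ i ∧ i < k := by rw [mem_Icc] at hi; omega
  have hinj : Set.InjOn σ (Icc 1 i : Set ℕ) :=
    hbij.injOn.mono fun j hj => by simp only [coe_Icc, Set.mem_Icc] at hj ⊢; omega
  set S := (Icc 1 i).image σ
  have hcard : #S = i := by rw [card_image_of_injOn hinj, Nat.card_Icc, Nat.add_sub_cancel]
  have hSsub : S ⊆ Icc 1 k := image_subset_iff.2 fun j hj =>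
    hbij.mapsTo (by simp only [coe_Icc, Set.mem_Icc, mem_Icc] at hj ⊢; omega)
  have hy : ∀ t ∈ Icc 1 k \ S, q t + r (k - t + 1) ≤ p (i + 1) := by
    intro t ht
    obtain ⟨j, hj, rfl⟩ := hbij.surjOn (mem_sdiff.1 ht).1
    have hj : 1 ≤ j ∧ j ≤ k := mem_Icc.1 hj
    have hij : i < j := not_le.1 fun hji =>
      (mem_sdiff.1 ht).2 (mem_image_of_mem σ (mem_Icc.2 ⟨hj.1, hji⟩))
    rw [← hperm j (mem_Icc.2 hj)]
    exact hpmono (i + 1) j (by omega) hij hj.2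
  rw [one_div_mul_sum_sub_le_iff p _ _ hi1]
  calc ∑ j ∈ Icc 1 i, (p j - p (i + 1))
      = ∑ t ∈ S, (q t + r (k - t + 1) - p (i + 1)) := by
        rw [sum_image hinj]
        exact sum_congr rfl fun j hj => by
          rw [mem_Icc] at hj; rw [hperm j (mem_Icc.2 ⟨hj.1, by omega⟩)]
    _ ≤ #S * (C₁ + C₂) :=
      sum_add_reflect_sub_le (fun a ha b hb hab => hqmono a b ha.1 hab hb.2)
        (fun a ha b hb hab => hrmono a b ha.1 hab hb.2)
        (isBalanced_of_one_div_mul_sum_sub_le hbq) (isBalanced_of_one_div_mul_sum_sub_le hbr)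
        hC₁ hC₂ hSsub (hcard ▸ hik) hy
    _ = i * (C₁ + C₂) := by rw [hcard]

theorem series_composition_balanced (k : ℕ) (hk : 2 ≤ k) (q r p : ℕ → ℝ)
    (hq0 : ∀ i ∈ Finset.Icc 1 k, 0 ≤ q i)
    (hr0 : ∀ i ∈ Finset.Icc 1 k, 0 ≤ r i)
    (hqmono : ∀ i j, 1 ≤ i → i ≤ j → j ≤ k → q j ≤ q i)
    (hrmono : ∀ i j, 1 ≤ i → i ≤ j → j ≤ k → r j ≤ r i)
    (hpmono : ∀ i j, 1 ≤ i → i ≤ j → j ≤ k → p j ≤ p i)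
    (σ : ℕ → ℕ)
    (hbij : Set.BijOn σ (Finset.Icc 1 k : Set ℕ) (Finset.Icc 1 k : Set ℕ))
    (hperm : ∀ i ∈ Finset.Icc 1 k, p i = q (σ i) + r (k - σ i + 1))
    (C₁ C₂ : ℝ) (hC₁ : 0 ≤ C₁) (hC₂ : 0 ≤ C₂)
    (hbq : ∀ i ∈ Finset.Icc 1 (k - 1),
      (1 / (i : ℝ)) * (∑ j ∈ Finset.Icc 1 i, q j) - q (i + 1) ≤ C₁)
    (hbr : ∀ i ∈ Finset.Icc 1 (k - 1),
      (1 / (i : ℝ)) * (∑ j ∈ Finset.Icc 1 i, r j) - r (i + 1) ≤ C₂) :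
    ∀ i ∈ Finset.Icc 1 (k - 1),
      (1 / (i : ℝ)) * (∑ j ∈ Finset.Icc 1 i, p j) - p (i + 1) ≤ C₁ + C₂ :=
  series_composition_balanced_general k q r p hqmono hrmono hpmono σ hbij hperm C₁ C₂ hC₁ hC₂ hbq
    hbr
end

section
/- Let q_1 ≥ ... ≥ q_k and r_1 ≥ ... ≥ r_k be nonincreasing real sequences and define p_i = q_i + r_{k−i+1} for i ∈ {1,...,k}. Then max_i p_i − min_i p_i ≤ max( q_1 − q_k, r_1 − r_k ). -/
theorem series_spread_bound (k : ℕ) (hk : 1 ≤ k) (q r : ℕ → ℝ)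
    (hqmono : ∀ i j, 1 ≤ i → i ≤ j → j ≤ k → q j ≤ q i)
    (hrmono : ∀ i j, 1 ≤ i → i ≤ j → j ≤ k → r j ≤ r i) :
    ∀ i ∈ Finset.Icc 1 k, ∀ j ∈ Finset.Icc 1 k,
      (q i + r (k - i + 1)) - (q j + r (k - j + 1)) ≤
        max (q 1 - q k) (r 1 - r k) := by
  intro i hi j hj
  simp only [Finset.mem_Icc] at hi hj
  obtain ⟨hi1, hik⟩ := hi
  obtain ⟨hj1, hjk⟩ := hj
  have hri1 : 1 ≤ k - i + 1 := by omega
  have hrik : k - i + 1 ≤ k := by omega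
  have hrj1 : 1 ≤ k - j + 1 := by omega
  have hrjk : k - j + 1 ≤ k := by omega
  rcases le_total i j with h | h
  · have h1 : q i - q j ≤ q 1 - q k := by
      have := hqmono 1 i le_rfl hi1 hik
      have := hqmono j k hj1 hjk le_rfl
      linarith
    have h2 : r (k - i + 1) - r (k - j + 1) ≤ 0 := by
      have := hrmono (k - j + 1) (k - i + 1) hrj1 (by omega) hrik
      linarith
    have := le_max_left (q 1 - q k) (r 1 - r k)
    linarith
  · have h1 : q i - q j ≤ 0 := by
      have := hqmono j i hj1 h hik
      linarith
    have h2 : r (k - i + 1) - r (k - j + 1) ≤ r 1 - r k := by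
      have := hrmono 1 (k - i + 1) le_rfl hri1 hrik
      have := hrmono (k - j + 1) k hrj1 hrjk le_rfl
      linarith
    have := le_max_right (q 1 - q k) (r 1 - r k)
    linarith
end

section
/- Let 0 ≤ i₁ ≤ k₁ and 0 ≤ i₂ ≤ k₂, and let q_1 ≥ ... ≥ q_{k₁}, r_1 ≥ ... ≥ r_{k₂} be nonincreasing nonnegative sequences. Let C ≥ 0 and t ≥ 0 satisfy: if i₁ < k₁ then ∑_{j=1}^{i₁} q_j ≤ i₁·(C + q_{i₁+1}) and q_{i₁+1} ≤ t; if i₁ = k₁ then ∑_{j=1}^{k₁} q_j ≤ k₁·C; and symmetrically for r with i₂. Then ∑_{j=1}^{i₁} q_j + ∑_{j=1}^{i₂} r_j ≤ (i₁ + i₂)·(C + t). -/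
theorem parallel_core_inequality (k₁ k₂ i₁ i₂ : ℕ) (hi₁ : i₁ ≤ k₁) (hi₂ : i₂ ≤ k₂)
    (q r : ℕ → ℝ)
    (hq0 : ∀ i ∈ Finset.Icc 1 k₁, 0 ≤ q i)
    (hr0 : ∀ i ∈ Finset.Icc 1 k₂, 0 ≤ r i)
    (hqmono : ∀ i j, 1 ≤ i → i ≤ j → j ≤ k₁ → q j ≤ q i)
    (hrmono : ∀ i j, 1 ≤ i → i ≤ j → j ≤ k₂ → r j ≤ r i)
    (C t : ℝ) (hC : 0 ≤ C) (ht : 0 ≤ t)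
    (hq1 : i₁ < k₁ → (∑ j ∈ Finset.Icc 1 i₁, q j ≤ (i₁ : ℝ) * (C + q (i₁ + 1)) ∧ q (i₁ + 1) ≤ t))
    (hq2 : i₁ = k₁ → ∑ j ∈ Finset.Icc 1 k₁, q j ≤ (k₁ : ℝ) * C)
    (hr1 : i₂ < k₂ → (∑ j ∈ Finset.Icc 1 i₂, r j ≤ (i₂ : ℝ) * (C + r (i₂ + 1)) ∧ r (i₂ + 1) ≤ t))
    (hr2 : i₂ = k₂ → ∑ j ∈ Finset.Icc 1 k₂, r j ≤ (k₂ : ℝ) * C) :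
    ∑ j ∈ Finset.Icc 1 i₁, q j + ∑ j ∈ Finset.Icc 1 i₂, r j ≤ ((i₁ + i₂ : ℕ) : ℝ) * (C + t) := by
  have hq : ∑ j ∈ Finset.Icc 1 i₁, q j ≤ (i₁ : ℝ) * (C + t) := by
    rcases lt_or_eq_of_le hi₁ with h | h
    · obtain ⟨h1, h2⟩ := hq1 h
      calc ∑ j ∈ Finset.Icc 1 i₁, q j ≤ (i₁ : ℝ) * (C + q (i₁ + 1)) := h1
        _ ≤ (i₁ : ℝ) * (C + t) := by
            apply mul_le_mul_of_nonneg_left (by linarith) (Nat.cast_nonneg _)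
    · subst h
      calc ∑ j ∈ Finset.Icc 1 i₁, q j ≤ (i₁ : ℝ) * C := hq2 rfl
        _ ≤ (i₁ : ℝ) * (C + t) := by
            apply mul_le_mul_of_nonneg_left (by linarith) (Nat.cast_nonneg _)
  have hr : ∑ j ∈ Finset.Icc 1 i₂, r j ≤ (i₂ : ℝ) * (C + t) := by
    rcases lt_or_eq_of_le hi₂ with h | h
    · obtain ⟨h1, h2⟩ := hr1 h
      calc ∑ j ∈ Finset.Icc 1 i₂, r j ≤ (i₂ : ℝ) * (C + r (i₂ + 1)) := h1
        _ ≤ (i₂ : ℝ) * (C + t) := by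
            apply mul_le_mul_of_nonneg_left (by linarith) (Nat.cast_nonneg _)
    · subst h
      calc ∑ j ∈ Finset.Icc 1 i₂, r j ≤ (i₂ : ℝ) * C := hr2 rfl
        _ ≤ (i₂ : ℝ) * (C + t) := by
            apply mul_le_mul_of_nonneg_left (by linarith) (Nat.cast_nonneg _)
  push_cast
  linarith
end
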